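/- arXiv:1503.06484 — 4 statements merged into one kernel-verified Lean document; each statement's English description precedes it below -/
import Mathlib

section
/- The set S = {u ∈ ℝ^{2p(m²+n²+mn)} : Ĥ u = r} is nonempty, and with μ = inf{‖u‖₂ : u ∈ S}, the normwise backward error satisfies μ/√(6p) ≤ η ≤ μ. -/
open Matrix
open scoped Kronecker

noncomputable section

/-- column-stacking `vec` of a matrix, indexed by (column, row). -/
def vecM {a b : ℕ} (M : Matrix (Fin a) (Fin b) ℝ) : Fin b × Fin a → ℝ :=
  fun ji => M ji.2 ji.1

/-- Euclidean norm of a finitely-indexed real vector. -/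
def l2norm {ι : Type*} [Fintype ι] (v : ι → ℝ) : ℝ :=
  Real.sqrt (∑ i, v i ^ 2)

/-- Frobenius norm of a real matrix. -/
def frob {ι κ : Type*} [Fintype ι] [Fintype κ] (M : Matrix ι κ ℝ) : ℝ :=
  Real.sqrt (∑ i, ∑ j, M i j ^ 2)

/-- Spectral norm of a real matrix: supremum of `‖M v‖₂` over the closed unit ball. -/
def specNorm {ι κ : Type*} [Fintype ι] [Fintype κ] (M : Matrix ι κ ℝ) : ℝ :=
  sSup ((fun v => l2norm (M.mulVec v)) '' {v | l2norm v ≤ 1})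

/-- sup-norm (`‖·‖∞`) of a finitely-indexed real vector. -/
def linf {ι : Type*} [Fintype ι] (v : ι → ℝ) : ℝ := ⨆ i, |v i|

/-- max-row-sum (∞-operator) norm of a real matrix. -/
def rowSumNorm {ι κ : Type*} [Fintype ι] [Fintype κ] (M : Matrix ι κ ℝ) : ℝ :=
  ⨆ i, ∑ j, |M i j|

/-- max-norm (`‖·‖_max`) of a real matrix. -/
def maxNorm {ι κ : Type*} [Fintype ι] [Fintype κ] (M : Matrix ι κ ℝ) : ℝ :=
  ⨆ i, ⨆ j, |M i j|

/-- entrywise absolute value of a matrix. -/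
def matAbs {ι κ : Type*} (M : Matrix ι κ ℝ) : Matrix ι κ ℝ := M.map (fun x => |x|)

/-- spectral radius (maximum modulus of the complex eigenvalues) of a real square matrix. -/
def specRad {ι : Type*} [Fintype ι] [DecidableEq ι] (M : Matrix ι ι ℝ) : ENNReal :=
  spectralRadius ℂ (M.map (fun x => (x : ℂ)))

/-- index type for the stacked vector `z = (vec X₁; vec Y₁; …; vec X_p; vec Y_p)`:
component `(k, 0, ·)` holds `vec X_k` and `(k, 1, ·)` holds `vec Y_k`. -/
abbrev BIdx (m n p : ℕ) := Fin p × Fin 2 × Fin n × Fin m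

/-- index type for the vec'd data `(vec A_k; vec B_k; vec E_k; vec C_k; vec D_k; vec F_k)`
of one period. -/
abbrev CIdx (m n : ℕ) :=
  (Fin m × Fin m) ⊕ (Fin n × Fin n) ⊕ (Fin n × Fin m) ⊕
  (Fin m × Fin m) ⊕ (Fin n × Fin n) ⊕ (Fin n × Fin m)

variable {m n p : ℕ}

/-- the stacked vector `(vec X₁; vec Y₁; …; vec X_p; vec Y_p)`. -/
def bigVec (X Y : Fin p → Matrix (Fin m) (Fin n) ℝ) : BIdx m n p → ℝ :=
  fun x => if x.2.1 = 0 then vecM (X x.1) x.2.2 else vecM (Y x.1) x.2.2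

/-- the coefficient matrix `W` of the PGCS equation: block row `(k,0)` has `Iₙ ⊗ A_k` in
block column `(k,0)` and `−(B_kᵀ ⊗ Iₘ)` in block column `(k,1)`; block row `(k,1)` has
`Iₙ ⊗ C_k` in block column `(k+1 mod p, 0)` and `−(D_kᵀ ⊗ Iₘ)` in block column `(k,1)`. -/
def Wmat [NeZero p] (A C : Fin p → Matrix (Fin m) (Fin m) ℝ)
    (B D : Fin p → Matrix (Fin n) (Fin n) ℝ) :
    Matrix (BIdx m n p) (BIdx m n p) ℝ :=
  Matrix.of fun x y =>
    if x.2.1 = 0 then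
      (if y.1 = x.1 ∧ y.2.1 = 0 then
        ((1 : Matrix (Fin n) (Fin n) ℝ) ⊗ₖ A x.1) x.2.2 y.2.2 else 0) +
      (if y.1 = x.1 ∧ y.2.1 = 1 then
        (-((B x.1)ᵀ ⊗ₖ (1 : Matrix (Fin m) (Fin m) ℝ))) x.2.2 y.2.2 else 0)
    else
      (if y.1 = x.1 + 1 ∧ y.2.1 = 0 then
        ((1 : Matrix (Fin n) (Fin n) ℝ) ⊗ₖ C x.1) x.2.2 y.2.2 else 0) +
      (if y.1 = x.1 ∧ y.2.1 = 1 then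
        (-((D x.1)ᵀ ⊗ₖ (1 : Matrix (Fin m) (Fin m) ℝ))) x.2.2 y.2.2 else 0)

/-- the block-diagonal matrix `Ĥ = diag(Ĥ⁽¹⁾,…,Ĥ⁽ᵖ⁾)` (also `H₁`, `H₂`) with block
`Ĥ⁽ᵏ⁾ = [α_k (X_kᵀ ⊗ Iₘ), −β_k (Iₙ ⊗ Y_k), −γ_k I, 0, 0, 0;
        0, 0, 0, ζ_k (X_{k+1}ᵀ ⊗ Iₘ), −τ_k (Iₙ ⊗ Y_k), −δ_k I]`. -/
def Hmat [NeZero p] (Xh Yh : Fin p → Matrix (Fin m) (Fin n) ℝ)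
    (al be ga ze ta de : Fin p → ℝ) :
    Matrix (BIdx m n p) (Fin p × CIdx m n) ℝ :=
  Matrix.of fun x y =>
    if y.1 = x.1 then
      if x.2.1 = 0 then
        (match y.2 with
        | Sum.inl a => al x.1 * (((Xh x.1)ᵀ ⊗ₖ (1 : Matrix (Fin m) (Fin m) ℝ)) x.2.2 a)
        | Sum.inr (Sum.inl b) =>
            -(be x.1 * (((1 : Matrix (Fin n) (Fin n) ℝ) ⊗ₖ Yh x.1) x.2.2 b))
        | Sum.inr (Sum.inr (Sum.inl e)) =>
            -(ga x.1 * ((1 : Matrix (Fin n × Fin m) (Fin n × Fin m) ℝ) x.2.2 e))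
        | _ => 0)
      else
        (match y.2 with
        | Sum.inr (Sum.inr (Sum.inr (Sum.inl c))) =>
            ze x.1 * (((Xh (x.1 + 1))ᵀ ⊗ₖ (1 : Matrix (Fin m) (Fin m) ℝ)) x.2.2 c)
        | Sum.inr (Sum.inr (Sum.inr (Sum.inr (Sum.inl d)))) =>
            -(ta x.1 * (((1 : Matrix (Fin n) (Fin n) ℝ) ⊗ₖ Yh x.1) x.2.2 d))
        | Sum.inr (Sum.inr (Sum.inr (Sum.inr (Sum.inr f)))) =>
            -(de x.1 * ((1 : Matrix (Fin n × Fin m) (Fin n × Fin m) ℝ) x.2.2 f))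
        | _ => 0)
    else 0

/-- the parameter vector `t = (vec A₁; vec B₁; vec E₁; vec C₁; vec D₁; vec F₁; …)`. -/
def tvec (A C : Fin p → Matrix (Fin m) (Fin m) ℝ)
    (B D : Fin p → Matrix (Fin n) (Fin n) ℝ)
    (E F : Fin p → Matrix (Fin m) (Fin n) ℝ) : Fin p × CIdx m n → ℝ :=
  fun y =>
    match y.2 with
    | Sum.inl a => vecM (A y.1) a
    | Sum.inr (Sum.inl b) => vecM (B y.1) b
    | Sum.inr (Sum.inr (Sum.inl e)) => vecM (E y.1) e
    | Sum.inr (Sum.inr (Sum.inr (Sum.inl c))) => vecM (C y.1) c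
    | Sum.inr (Sum.inr (Sum.inr (Sum.inr (Sum.inl d)))) => vecM (D y.1) d
    | Sum.inr (Sum.inr (Sum.inr (Sum.inr (Sum.inr f)))) => vecM (F y.1) f

/-- the matrix `A_k` encoded in a parameter vector `t`. -/
def pA (t : Fin p × CIdx m n → ℝ) (k : Fin p) : Matrix (Fin m) (Fin m) ℝ :=
  Matrix.of fun i j => t (k, Sum.inl (j, i))

/-- the matrix `B_k` encoded in a parameter vector `t`. -/
def pB (t : Fin p × CIdx m n → ℝ) (k : Fin p) : Matrix (Fin n) (Fin n) ℝ :=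
  Matrix.of fun i j => t (k, Sum.inr (Sum.inl (j, i)))

/-- the matrix `E_k` encoded in a parameter vector `t`. -/
def pE (t : Fin p × CIdx m n → ℝ) (k : Fin p) : Matrix (Fin m) (Fin n) ℝ :=
  Matrix.of fun i j => t (k, Sum.inr (Sum.inr (Sum.inl (j, i))))

/-- the matrix `C_k` encoded in a parameter vector `t`. -/
def pC (t : Fin p × CIdx m n → ℝ) (k : Fin p) : Matrix (Fin m) (Fin m) ℝ :=
  Matrix.of fun i j => t (k, Sum.inr (Sum.inr (Sum.inr (Sum.inl (j, i)))))

/-- the matrix `D_k` encoded in a parameter vector `t`. -/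
def pD (t : Fin p × CIdx m n → ℝ) (k : Fin p) : Matrix (Fin n) (Fin n) ℝ :=
  Matrix.of fun i j => t (k, Sum.inr (Sum.inr (Sum.inr (Sum.inr (Sum.inl (j, i))))))

/-- the matrix `F_k` encoded in a parameter vector `t`. -/
def pF (t : Fin p × CIdx m n → ℝ) (k : Fin p) : Matrix (Fin m) (Fin n) ℝ :=
  Matrix.of fun i j => t (k, Sum.inr (Sum.inr (Sum.inr (Sum.inr (Sum.inr (j, i))))))

/-- the matrix `W(t)` built from the parameter vector `t`. -/
def Wt [NeZero p] (t : Fin p × CIdx m n → ℝ) : Matrix (BIdx m n p) (BIdx m n p) ℝ :=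
  Wmat (pA t) (pC t) (pB t) (pD t)

/-- the right-hand side `g(t) = (vec E₁; vec F₁; …; vec E_p; vec F_p)`. -/
def gt (t : Fin p × CIdx m n → ℝ) : BIdx m n p → ℝ := bigVec (pE t) (pF t)

/-- the set of parameters for which `W(t)` is invertible. -/
def Dset (m n p : ℕ) [NeZero p] : Set (Fin p × CIdx m n → ℝ) := {t | IsUnit (Wt t)}

/-- the solution map `Ψ(t) = W(t)⁻¹ g(t)`. -/
def Psi [NeZero p] (t : Fin p × CIdx m n → ℝ) : BIdx m n p → ℝ := (Wt t)⁻¹.mulVec (gt t)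

/-- the solution matrix `X_k` read off from `Ψ(t)`. -/
def Xsol [NeZero p] (t : Fin p × CIdx m n → ℝ) (k : Fin p) : Matrix (Fin m) (Fin n) ℝ :=
  Matrix.of fun i j => Psi t (k, (0 : Fin 2), (j, i))

/-- the solution matrix `Y_k` read off from `Ψ(t)`. -/
def Ysol [NeZero p] (t : Fin p × CIdx m n → ℝ) (k : Fin p) : Matrix (Fin m) (Fin n) ℝ :=
  Matrix.of fun i j => Psi t (k, (1 : Fin 2), (j, i))

/-- the matrix `H₂(t)` (all tolerances equal to one), built from the solution `Ψ(t)`. -/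
def H2t [NeZero p] (t : Fin p × CIdx m n → ℝ) : Matrix (BIdx m n p) (Fin p × CIdx m n) ℝ :=
  Hmat (Xsol t) (Ysol t) 1 1 1 1 1 1

/-- the componentwise relative ball `B⁰(a, ε)`. -/
def B0 {ι : Type*} (a : ι → ℝ) (ε : ℝ) : Set (ι → ℝ) := {x | ∀ i, |x i - a i| ≤ ε * |a i|}

/-- the componentwise distance `d(x, a)`. -/
def cdist {ι : Type*} [Fintype ι] (x a : ι → ℝ) : ℝ :=
  ⨆ i, if a i = 0 then |x i - a i| else |x i - a i| / |a i|

/-!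
Split a vector `u` indexed like the columns of `Ĥ` into its `6p` blocks, read as matrices
`U_{A,k}, U_{B,k}, …` via `pA u k, pB u k, …`. Then `Ĥ u = r` says precisely that
`ΔA_k = α_k U_{A,k}, ΔB_k = β_k U_{B,k}, …, ΔF_k = δ_k U_{F,k}` solve the perturbed equations.
Every block of `u` has Frobenius norm at most `‖u‖₂`, so each `u ∈ S` is admissible at level
`ε = ‖u‖₂` and `η ≤ μ`. Conversely, dividing an admissible perturbation at level `ε` by the
tolerances gives a `u ∈ S` whose `6p` blocks have Frobenius norm at most `ε`, so
`μ ≤ ‖u‖₂ ≤ √(6p) ε`.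
-/

lemma frob_nonneg {ι κ : Type*} [Fintype ι] [Fintype κ] (M : Matrix ι κ ℝ) : 0 ≤ frob M :=
  Real.sqrt_nonneg _

lemma l2norm_nonneg {ι : Type*} [Fintype ι] (v : ι → ℝ) : 0 ≤ l2norm v :=
  Real.sqrt_nonneg _

lemma frob_sq_eq_sum {ι κ : Type*} [Fintype ι] [Fintype κ] (M : Matrix ι κ ℝ) :
    frob M ^ 2 = ∑ x : κ × ι, M x.2 x.1 ^ 2 := by
  rw [frob, Real.sq_sqrt (by positivity), Fintype.sum_prod_type, Finset.sum_comm]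

lemma frob_smul {ι κ : Type*} [Fintype ι] [Fintype κ] (c : ℝ) (M : Matrix ι κ ℝ) :
    frob (c • M) = |c| * frob M := by
  simp only [frob, Matrix.smul_apply, smul_eq_mul, mul_pow, ← Finset.mul_sum]
  rw [Real.sqrt_mul (sq_nonneg c), Real.sqrt_sq_eq_abs]

lemma frob_smul_le {ι κ : Type*} [Fintype ι] [Fintype κ] {c ε : ℝ} {M : Matrix ι κ ℝ}
    (hc : 0 ≤ c) (hM : frob M ≤ ε) : frob (c • M) ≤ ε * c := by
  rw [frob_smul, abs_of_nonneg hc, mul_comm]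
  exact mul_le_mul_of_nonneg_right hM hc

lemma frob_inv_smul_le {ι κ : Type*} [Fintype ι] [Fintype κ] {c ε : ℝ} {M : Matrix ι κ ℝ}
    (hc : 0 < c) (hM : frob M ≤ ε * c) : frob (c⁻¹ • M) ≤ ε := by
  rw [frob_smul, abs_inv, abs_of_pos hc, inv_mul_le_iff₀ hc, mul_comm]
  exact hM

lemma perturbed_eq_iff {ι κ : Type*} [Fintype ι] [Fintype κ]
    (A dA : Matrix ι ι ℝ) (B dB : Matrix κ κ ℝ) (E dE X Y : Matrix ι κ ℝ) :
    (A + dA) * X - Y * (B + dB) = E + dE ↔ dA * X - Y * dB - dE = E - (A * X - Y * B) := by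
  have h : (A + dA) * X - Y * (B + dB) - (E + dE) =
      dA * X - Y * dB - dE - (E - (A * X - Y * B)) := by
    rw [Matrix.add_mul, Matrix.mul_add]
    abel
  rw [← sub_eq_zero, h, sub_eq_zero]

section Blocks

variable (A C : Fin p → Matrix (Fin m) (Fin m) ℝ) (B D : Fin p → Matrix (Fin n) (Fin n) ℝ)
  (E F : Fin p → Matrix (Fin m) (Fin n) ℝ)

@[simp] lemma pA_tvec : pA (tvec A C B D E F) = A := rfl
@[simp] lemma pB_tvec : pB (tvec A C B D E F) = B := rfl
@[simp] lemma pE_tvec : pE (tvec A C B D E F) = E := rfl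
@[simp] lemma pC_tvec : pC (tvec A C B D E F) = C := rfl
@[simp] lemma pD_tvec : pD (tvec A C B D E F) = D := rfl
@[simp] lemma pF_tvec : pF (tvec A C B D E F) = F := rfl

end Blocks

lemma l2norm_sq_eq_sum_frob_sq (u : Fin p × CIdx m n → ℝ) :
    l2norm u ^ 2 = ∑ k, (frob (pA u k) ^ 2 + frob (pB u k) ^ 2 + frob (pE u k) ^ 2 +
      frob (pC u k) ^ 2 + frob (pD u k) ^ 2 + frob (pF u k) ^ 2) := by
  rw [l2norm, Real.sq_sqrt (by positivity), Fintype.sum_prod_type]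
  refine Finset.sum_congr rfl fun k _ => ?_
  simp only [Fintype.sum_sum_type, pA, pB, pE, pC, pD, pF, frob_sq_eq_sum, of_apply]
  ring

lemma frob_blocks_le_l2norm (u : Fin p × CIdx m n → ℝ) (k : Fin p) :
    frob (pA u k) ≤ l2norm u ∧ frob (pB u k) ≤ l2norm u ∧ frob (pE u k) ≤ l2norm u ∧
      frob (pC u k) ≤ l2norm u ∧ frob (pD u k) ≤ l2norm u ∧ frob (pF u k) ≤ l2norm u := by
  have hk := Finset.single_le_sum (f := fun k => frob (pA u k) ^ 2 + frob (pB u k) ^ 2 +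
    frob (pE u k) ^ 2 + frob (pC u k) ^ 2 + frob (pD u k) ^ 2 + frob (pF u k) ^ 2)
    (fun _ _ => by positivity) (Finset.mem_univ k)
  rw [← l2norm_sq_eq_sum_frob_sq] at hk
  simp only [← pow_le_pow_iff_left₀ (frob_nonneg _) (l2norm_nonneg u) two_ne_zero]
  refine ⟨?_, ?_, ?_, ?_, ?_, ?_⟩ <;>
    linarith [sq_nonneg (frob (pA u k)), sq_nonneg (frob (pB u k)), sq_nonneg (frob (pE u k)),
      sq_nonneg (frob (pC u k)), sq_nonneg (frob (pD u k)), sq_nonneg (frob (pF u k))]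

lemma l2norm_le_of_frob_blocks_le {u : Fin p × CIdx m n → ℝ} {ε : ℝ} (hε : 0 ≤ ε)
    (hu : ∀ k, frob (pA u k) ≤ ε ∧ frob (pB u k) ≤ ε ∧ frob (pE u k) ≤ ε ∧
      frob (pC u k) ≤ ε ∧ frob (pD u k) ≤ ε ∧ frob (pF u k) ≤ ε) :
    l2norm u ≤ Real.sqrt (6 * p) * ε := by
  rw [← pow_le_pow_iff_left₀ (l2norm_nonneg u) (by positivity) two_ne_zero, mul_pow,
    Real.sq_sqrt (by positivity), l2norm_sq_eq_sum_frob_sq]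
  have sq_le {a b : ℕ} {M : Matrix (Fin a) (Fin b) ℝ} (hM : frob M ≤ ε) : frob M ^ 2 ≤ ε ^ 2 :=
    pow_le_pow_left₀ (frob_nonneg M) hM 2
  calc _ ≤ ∑ _k : Fin p, 6 * ε ^ 2 := Finset.sum_le_sum fun k _ => by
        obtain ⟨hA, hB, hE, hC, hD, hF⟩ := hu k
        linarith [sq_le hA, sq_le hB, sq_le hE, sq_le hC, sq_le hD, sq_le hF]
    _ = 6 * p * ε ^ 2 := by
        rw [Finset.sum_const, Finset.card_univ, Fintype.card_fin, nsmul_eq_mul]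
        ring

lemma bigVec_inj {X Y X' Y' : Fin p → Matrix (Fin m) (Fin n) ℝ} :
    bigVec X Y = bigVec X' Y' ↔ X = X' ∧ Y = Y' := by
  refine ⟨fun h => ⟨funext fun k => ?_, funext fun k => ?_⟩, fun h => h.1 ▸ h.2 ▸ rfl⟩ <;>
    ext i j
  · simpa [bigVec, vecM] using congrFun h (k, 0, j, i)
  · simpa [bigVec, vecM] using congrFun h (k, 1, j, i)

lemma Hmat_mulVec [NeZero p] (Xh Yh : Fin p → Matrix (Fin m) (Fin n) ℝ)
    (al be ga ze ta de : Fin p → ℝ) (u : Fin p × CIdx m n → ℝ) :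
    Hmat Xh Yh al be ga ze ta de *ᵥ u =
      bigVec (fun k => al k • (pA u k * Xh k) - be k • (Yh k * pB u k) - ga k • pE u k)
        (fun k => ze k • (pC u k * Xh (k + 1)) - ta k • (Yh k * pD u k) - de k • pF u k) := by
  ext ⟨k, c, j, i⟩
  rw [mulVec, dotProduct, Fintype.sum_prod_type, Finset.sum_eq_single k
    (fun l _ hl => by simp [Hmat, hl]) (by simp)]
  fin_cases c <;>
  simp only [Hmat, bigVec, vecM, pA, pB, pC, pD, pE, pF, Fin.isValue, Fin.zero_eta, Fin.mk_one,
    of_apply, kroneckerMap_apply, transpose_apply, one_apply, Matrix.sub_apply, Matrix.smul_apply,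
    Matrix.mul_apply, smul_eq_mul, ↓reduceIte, one_ne_zero, mul_ite, ite_mul,
    mul_one, mul_zero, one_mul, zero_mul, neg_mul, add_zero, zero_add, mul_assoc, mul_comm (u _),
    Fintype.sum_sum_type, Fintype.sum_prod_type, Finset.sum_ite_eq, Finset.mem_univ,
    Finset.sum_neg_distrib, Finset.sum_ite_irrel, Finset.sum_const_zero, ← Finset.mul_sum] <;> ring

section Perturbation

variable [NeZero p] (A C : Fin p → Matrix (Fin m) (Fin m) ℝ)
  (B D : Fin p → Matrix (Fin n) (Fin n) ℝ) (E F Xh Yh : Fin p → Matrix (Fin m) (Fin n) ℝ)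
  (al be ga ze ta de : Fin p → ℝ)

def backwardErrorSet : Set ℝ := {ε : ℝ | 0 ≤ ε ∧
  ∃ (dA dC : Fin p → Matrix (Fin m) (Fin m) ℝ)
    (dB dD : Fin p → Matrix (Fin n) (Fin n) ℝ)
    (dE dF : Fin p → Matrix (Fin m) (Fin n) ℝ),
    (∀ k, frob (dA k) ≤ ε * al k ∧ frob (dB k) ≤ ε * be k ∧ frob (dE k) ≤ ε * ga k ∧
      frob (dC k) ≤ ε * ze k ∧ frob (dD k) ≤ ε * ta k ∧ frob (dF k) ≤ ε * de k) ∧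
    (∀ k, (A k + dA k) * Xh k - Yh k * (B k + dB k) = E k + dE k ∧
      (C k + dC k) * Xh (k + 1) - Yh k * (D k + dD k) = F k + dF k)}

def pgcsResidual : BIdx m n p → ℝ :=
  bigVec (fun k => E k - (A k * Xh k - Yh k * B k))
    (fun k => F k - (C k * Xh (k + 1) - Yh k * D k))

variable {A C B D E F Xh Yh al be ga ze ta de}

lemma Hmat_mulVec_eq_residual_iff (u : Fin p × CIdx m n → ℝ) :
    Hmat Xh Yh al be ga ze ta de *ᵥ u = pgcsResidual A C B D E F Xh Yh ↔
      ∀ k, (A k + al k • pA u k) * Xh k - Yh k * (B k + be k • pB u k) = E k + ga k • pE u k ∧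
        (C k + ze k • pC u k) * Xh (k + 1) - Yh k * (D k + ta k • pD u k) =
          F k + de k • pF u k := by
  rw [Hmat_mulVec, pgcsResidual, bigVec_inj, funext_iff, funext_iff, ← forall_and]
  simp only [perturbed_eq_iff, Matrix.smul_mul, Matrix.mul_smul]

lemma exists_Hmat_mulVec_eq_residual (hga : ∀ k, ga k ≠ 0) (hde : ∀ k, de k ≠ 0) :
    ∃ u, Hmat Xh Yh al be ga ze ta de *ᵥ u = pgcsResidual A C B D E F Xh Yh := by
  -- absorb the whole residual into the perturbations of `E` and `F`
  refine ⟨tvec 0 0 0 0 (fun k => (ga k)⁻¹ • (A k * Xh k - Yh k * B k - E k))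
    (fun k => (de k)⁻¹ • (C k * Xh (k + 1) - Yh k * D k - F k)), ?_⟩
  rw [Hmat_mulVec_eq_residual_iff]
  intro k
  simp only [pA_tvec, pB_tvec, pE_tvec, pC_tvec, pD_tvec, pF_tvec, Pi.zero_apply, smul_zero,
    add_zero, smul_inv_smul₀ (hga k), smul_inv_smul₀ (hde k), add_sub_cancel, and_self]

lemma l2norm_mem_backwardErrorSet (hal : ∀ k, 0 ≤ al k) (hbe : ∀ k, 0 ≤ be k)
    (hga : ∀ k, 0 ≤ ga k) (hze : ∀ k, 0 ≤ ze k) (hta : ∀ k, 0 ≤ ta k) (hde : ∀ k, 0 ≤ de k)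
    {u : Fin p × CIdx m n → ℝ}
    (hu : Hmat Xh Yh al be ga ze ta de *ᵥ u = pgcsResidual A C B D E F Xh Yh) :
    l2norm u ∈ backwardErrorSet A C B D E F Xh Yh al be ga ze ta de := by
  refine ⟨l2norm_nonneg u, fun k => al k • pA u k, fun k => ze k • pC u k,
    fun k => be k • pB u k, fun k => ta k • pD u k, fun k => ga k • pE u k,
    fun k => de k • pF u k, fun k => ?_, (Hmat_mulVec_eq_residual_iff ..).1 hu⟩
  obtain ⟨hA, hB, hE, hC, hD, hF⟩ := frob_blocks_le_l2norm u k
  exact ⟨frob_smul_le (hal k) hA, frob_smul_le (hbe k) hB, frob_smul_le (hga k) hE,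
    frob_smul_le (hze k) hC, frob_smul_le (hta k) hD, frob_smul_le (hde k) hF⟩

lemma exists_Hmat_mulVec_eq_residual_l2norm_le (hal : ∀ k, 0 < al k) (hbe : ∀ k, 0 < be k)
    (hga : ∀ k, 0 < ga k) (hze : ∀ k, 0 < ze k) (hta : ∀ k, 0 < ta k) (hde : ∀ k, 0 < de k)
    {ε : ℝ} (hε : ε ∈ backwardErrorSet A C B D E F Xh Yh al be ga ze ta de) :
    ∃ u, Hmat Xh Yh al be ga ze ta de *ᵥ u = pgcsResidual A C B D E F Xh Yh ∧
      l2norm u ≤ Real.sqrt (6 * p) * ε := by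
  obtain ⟨hε0, dA, dC, dB, dD, dE, dF, hbound, hpert⟩ := hε
  refine ⟨tvec (fun k => (al k)⁻¹ • dA k) (fun k => (ze k)⁻¹ • dC k)
    (fun k => (be k)⁻¹ • dB k) (fun k => (ta k)⁻¹ • dD k) (fun k => (ga k)⁻¹ • dE k)
    (fun k => (de k)⁻¹ • dF k), ?_, l2norm_le_of_frob_blocks_le hε0 fun k => ?_⟩
  · rw [Hmat_mulVec_eq_residual_iff]
    intro k
    simp only [pA_tvec, pB_tvec, pE_tvec, pC_tvec, pD_tvec, pF_tvec,
      smul_inv_smul₀ (hal k).ne', smul_inv_smul₀ (hbe k).ne', smul_inv_smul₀ (hga k).ne',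
      smul_inv_smul₀ (hze k).ne', smul_inv_smul₀ (hta k).ne', smul_inv_smul₀ (hde k).ne']
    exact hpert k
  · obtain ⟨hA, hB, hE, hC, hD, hF⟩ := hbound k
    simp only [pA_tvec, pB_tvec, pE_tvec, pC_tvec, pD_tvec, pF_tvec]
    exact ⟨frob_inv_smul_le (hal k) hA, frob_inv_smul_le (hbe k) hB,
      frob_inv_smul_le (hga k) hE, frob_inv_smul_le (hze k) hC, frob_inv_smul_le (hta k) hD,
      frob_inv_smul_le (hde k) hF⟩

end Perturbation

theorem backward_error_bounds_general (m n p : ℕ) [NeZero p]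
    (A C : Fin p → Matrix (Fin m) (Fin m) ℝ) (B D : Fin p → Matrix (Fin n) (Fin n) ℝ)
    (E F Xh Yh : Fin p → Matrix (Fin m) (Fin n) ℝ)
    (al be ga ze ta de : Fin p → ℝ)
    (hal : ∀ k, 0 < al k) (hbe : ∀ k, 0 < be k) (hga : ∀ k, 0 < ga k)
    (hze : ∀ k, 0 < ze k) (hta : ∀ k, 0 < ta k) (hde : ∀ k, 0 < de k) :
    let r : BIdx m n p → ℝ :=
      bigVec (fun k => E k - (A k * Xh k - Yh k * B k))
        (fun k => F k - (C k * Xh (k + 1) - Yh k * D k))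
    let S : Set (Fin p × CIdx m n → ℝ) :=
      {u | (Hmat Xh Yh al be ga ze ta de).mulVec u = r}
    let μ : ℝ := sInf (l2norm '' S)
    let η : ℝ := sInf {ε : ℝ | 0 ≤ ε ∧
      ∃ (dA dC : Fin p → Matrix (Fin m) (Fin m) ℝ)
        (dB dD : Fin p → Matrix (Fin n) (Fin n) ℝ)
        (dE dF : Fin p → Matrix (Fin m) (Fin n) ℝ),
        (∀ k, frob (dA k) ≤ ε * al k ∧ frob (dB k) ≤ ε * be k ∧ frob (dE k) ≤ ε * ga k ∧
          frob (dC k) ≤ ε * ze k ∧ frob (dD k) ≤ ε * ta k ∧ frob (dF k) ≤ ε * de k) ∧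
        (∀ k, (A k + dA k) * Xh k - Yh k * (B k + dB k) = E k + dE k ∧
          (C k + dC k) * Xh (k + 1) - Yh k * (D k + dD k) = F k + dF k)}
    S.Nonempty ∧ μ / Real.sqrt (6 * (p : ℝ)) ≤ η ∧ η ≤ μ := by
  intro r S μ η
  have hS : S.Nonempty :=
    exists_Hmat_mulVec_eq_residual (fun k => (hga k).ne') (fun k => (hde k).ne')
  have hT : ∀ u ∈ S, l2norm u ∈ backwardErrorSet A C B D E F Xh Yh al be ga ze ta de :=
    fun u => l2norm_mem_backwardErrorSet (fun k => (hal k).le) (fun k => (hbe k).le)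
      (fun k => (hga k).le) (fun k => (hze k).le) (fun k => (hta k).le) (fun k => (hde k).le)
  refine ⟨hS, le_csInf ⟨_, hT _ hS.some_mem⟩ fun ε hε => ?_, le_csInf (hS.image _) ?_⟩
  · obtain ⟨u, hu, hle⟩ := exists_Hmat_mulVec_eq_residual_l2norm_le hal hbe hga hze hta hde hε
    have hp : (0 : ℝ) < p := Nat.cast_pos.2 (NeZero.pos p)
    have hbdd : BddBelow (l2norm '' S) := ⟨0, by rintro _ ⟨v, -, rfl⟩; exact l2norm_nonneg v⟩
    rw [div_le_iff₀ (Real.sqrt_pos.2 (by positivity)), mul_comm]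
    exact (csInf_le hbdd ⟨u, hu, rfl⟩).trans hle
  · rintro _ ⟨u, hu, rfl⟩
    exact csInf_le ⟨0, fun _ hε => hε.1⟩ (hT u hu)

/-- the solution set of `Ĥ u = r` is nonempty and the normwise backward
error `η` satisfies `μ/√(6p) ≤ η ≤ μ`, where `μ = inf {‖u‖₂ : Ĥ u = r}`. -/
theorem backward_error_bounds (m n p : ℕ) [NeZero m] [NeZero n] [NeZero p]
    (A C : Fin p → Matrix (Fin m) (Fin m) ℝ) (B D : Fin p → Matrix (Fin n) (Fin n) ℝ)
    (E F Xh Yh : Fin p → Matrix (Fin m) (Fin n) ℝ)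
    (al be ga ze ta de : Fin p → ℝ)
    (hal : ∀ k, 0 < al k) (hbe : ∀ k, 0 < be k) (hga : ∀ k, 0 < ga k)
    (hze : ∀ k, 0 < ze k) (hta : ∀ k, 0 < ta k) (hde : ∀ k, 0 < de k) :
    let r : BIdx m n p → ℝ :=
      bigVec (fun k => E k - (A k * Xh k - Yh k * B k))
        (fun k => F k - (C k * Xh (k + 1) - Yh k * D k))
    let S : Set (Fin p × CIdx m n → ℝ) :=
      {u | (Hmat Xh Yh al be ga ze ta de).mulVec u = r}
    let μ : ℝ := sInf (l2norm '' S)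
    let η : ℝ := sInf {ε : ℝ | 0 ≤ ε ∧
      ∃ (dA dC : Fin p → Matrix (Fin m) (Fin m) ℝ)
        (dB dD : Fin p → Matrix (Fin n) (Fin n) ℝ)
        (dE dF : Fin p → Matrix (Fin m) (Fin n) ℝ),
        (∀ k, frob (dA k) ≤ ε * al k ∧ frob (dB k) ≤ ε * be k ∧ frob (dE k) ≤ ε * ga k ∧
          frob (dC k) ≤ ε * ze k ∧ frob (dD k) ≤ ε * ta k ∧ frob (dF k) ≤ ε * de k) ∧
        (∀ k, (A k + dA k) * Xh k - Yh k * (B k + dB k) = E k + dE k ∧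
          (C k + dC k) * Xh (k + 1) - Yh k * (D k + dD k) = F k + dF k)}
    S.Nonempty ∧ μ / Real.sqrt (6 * (p : ℝ)) ≤ η ∧ η ≤ μ :=
  backward_error_bounds_general m n p A C B D E F Xh Yh al be ga ze ta de hal hbe hga hze hta hde
end
end

section
/- Assume ‖W⁻¹ΔW‖₂ < 1, the tolerances α_k, β_k, γ_k, ζ_k, τ_k, δ_k are positive, and set ε = max over k = 1,…,p of max{‖ΔA_k‖_F/α_k, ‖ΔB_k‖_F/β_k, ‖ΔE_k‖_F/γ_k, ‖ΔC_k‖_F/ζ_k, ‖ΔD_k‖_F/τ_k, ‖ΔF_k‖_F/δ_k}. If (ΔX_k, ΔY_k) solves the perturbed PGCS equation, then ‖Δz‖₂ ≤ √(6p) ‖W⁻¹H₁‖₂ ε / (1 − ‖W⁻¹ΔW‖₂). -/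
open Matrix
open scoped Kronecker

noncomputable section

variable {m n p : ℕ}

/-!
Subtracting `W z = g` from the perturbed system `(W + ΔW)(z + Δz) = g + Δg` gives
`W Δz = -(ΔW z - Δg) - ΔW Δz`. The first-order residual `ΔW z - Δg` is linear in the data
perturbations: it equals `H₁ u`, where `u` is the vector of perturbations `vec ΔA_k, …, vec ΔF_k`
divided by the corresponding tolerances. Hence `Δz = -W⁻¹H₁ u - W⁻¹ΔW Δz`, so
`(1 - ‖W⁻¹ΔW‖₂) ‖Δz‖₂ ≤ ‖W⁻¹H₁‖₂ ‖u‖₂`, and `u` consists of `6p` blocks of norm at most `ε`.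
-/

open scoped Matrix.Norms.L2Operator

section Norms

variable {ι κ : Type*} [Fintype ι] [Fintype κ]

lemma l2norm_eq_norm_toLp (v : ι → ℝ) : l2norm v = ‖WithLp.toLp 2 v‖ := by
  simp [l2norm, EuclideanSpace.norm_eq, sq_abs]

lemma specNorm_eq_l2_opNorm [DecidableEq κ] (M : Matrix ι κ ℝ) : specNorm M = ‖M‖ := by
  rw [Matrix.l2_opNorm_def, ← ContinuousLinearMap.sSup_unitClosedBall_eq_norm, specNorm]
  congr 1
  ext r
  simp only [Set.mem_image, Set.mem_ofPred_eq, Metric.mem_closedBall, dist_zero_right,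
    l2norm_eq_norm_toLp]
  constructor
  · rintro ⟨v, hv, rfl⟩
    exact ⟨WithLp.toLp 2 v, hv, by simp [Matrix.toEuclideanLin, Matrix.toLpLin_apply]⟩
  · rintro ⟨x, hx, rfl⟩
    exact ⟨x.ofLp, by simpa using hx, by simp [Matrix.toEuclideanLin, Matrix.toLpLin_apply]⟩

lemma specNorm_nonneg (M : Matrix ι κ ℝ) : 0 ≤ specNorm M := by
  classical
  exact specNorm_eq_l2_opNorm M ▸ norm_nonneg _

lemma l2norm_mulVec_le (M : Matrix ι κ ℝ) (v : κ → ℝ) :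
    l2norm (M *ᵥ v) ≤ specNorm M * l2norm v := by
  classical
  simpa [l2norm_eq_norm_toLp, specNorm_eq_l2_opNorm] using M.l2_opNorm_mulVec (WithLp.toLp 2 v)

end Norms

section Perturbation

variable {ι κ : Type*} [Fintype ι] [Fintype κ]

lemma l2norm_le_of_eq_neg_sub {M : Matrix ι κ ℝ} {N : Matrix ι ι ℝ} {u : κ → ℝ} {v : ι → ℝ}
    (hv : v = -(M *ᵥ u) - N *ᵥ v) (hN : specNorm N < 1) :
    l2norm v ≤ specNorm M * l2norm u / (1 - specNorm N) := by
  have hv' : l2norm v ≤ specNorm M * l2norm u + specNorm N * l2norm v :=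
    calc l2norm v = l2norm (-(M *ᵥ u) + -(N *ᵥ v)) := by rw [← sub_eq_add_neg, ← hv]
      _ ≤ l2norm (M *ᵥ u) + l2norm (N *ᵥ v) := by
        simpa only [l2norm_eq_norm_toLp, WithLp.toLp_add, WithLp.toLp_neg, norm_neg]
          using norm_add_le (WithLp.toLp 2 (-(M *ᵥ u))) (WithLp.toLp 2 (-(N *ᵥ v)))
      _ ≤ _ := add_le_add (l2norm_mulVec_le M u) (l2norm_mulVec_le N v)
  rw [le_div_iff₀ (sub_pos.mpr hN)]
  linarith

variable [DecidableEq ι]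

lemma eq_neg_sub_of_perturbed {W dW : Matrix ι ι ℝ} {H : Matrix ι κ ℝ} {z dz g dg : ι → ℝ}
    {u : κ → ℝ} (hW : IsUnit W) (hz : W *ᵥ z = g) (hdz : (W + dW) *ᵥ (z + dz) = g + dg)
    (hH : H *ᵥ u = dW *ᵥ z - dg) :
    dz = -((W⁻¹ * H) *ᵥ u) - (W⁻¹ * dW) *ᵥ dz := by
  have hWdz : W *ᵥ dz = -(H *ᵥ u) - dW *ᵥ dz := by
    rw [Matrix.add_mulVec, Matrix.mulVec_add, Matrix.mulVec_add, hz] at hdz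
    rw [hH]
    linear_combination hdz
  rw [← Matrix.mulVec_mulVec, ← Matrix.mulVec_mulVec, ← Matrix.mulVec_neg, ← Matrix.mulVec_sub,
    ← hWdz, Matrix.mulVec_mulVec, Matrix.nonsing_inv_mul _ ((W.isUnit_iff_isUnit_det).mp hW),
    Matrix.one_mulVec]

theorem l2norm_le_of_perturbed {W dW : Matrix ι ι ℝ} {H : Matrix ι κ ℝ} {z dz g dg : ι → ℝ}
    {u : κ → ℝ} (hW : IsUnit W) (hz : W *ᵥ z = g) (hdz : (W + dW) *ᵥ (z + dz) = g + dg)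
    (hH : H *ᵥ u = dW *ᵥ z - dg) (hlt : specNorm (W⁻¹ * dW) < 1) :
    l2norm dz ≤ specNorm (W⁻¹ * H) * l2norm u / (1 - specNorm (W⁻¹ * dW)) :=
  l2norm_le_of_eq_neg_sub (eq_neg_sub_of_perturbed hW hz hdz hH) hlt

end Perturbation

section PGCS

lemma bigVec_add (X X' Y Y' : Fin p → Matrix (Fin m) (Fin n) ℝ) :
    bigVec (X + X') (Y + Y') = bigVec X Y + bigVec X' Y' := by
  ext ⟨k, s, ji⟩
  fin_cases s <;> rfl

lemma bigVec_sub (X X' Y Y' : Fin p → Matrix (Fin m) (Fin n) ℝ) :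
    bigVec (X - X') (Y - Y') = bigVec X Y - bigVec X' Y' := by
  ext ⟨k, s, ji⟩
  fin_cases s <;> rfl

lemma sum_ite_block {ι : Type*} [Fintype ι] (v : Fin p × Fin 2 × ι → ℝ) (l : Fin p) (t : Fin 2)
    (w : ι → ℝ) :
    ∑ y, (if y.1 = l ∧ y.2.1 = t then w y.2.2 else 0) * v y = ∑ i, w i * v (l, t, i) := by
  simp [Fintype.sum_prod_type, ite_and]

variable [NeZero p]

lemma Wmat_add (A C dA dC : Fin p → Matrix (Fin m) (Fin m) ℝ)
    (B D dB dD : Fin p → Matrix (Fin n) (Fin n) ℝ) :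
    Wmat (A + dA) (C + dC) (B + dB) (D + dD) = Wmat A C B D + Wmat dA dC dB dD := by
  ext x y
  simp only [Wmat, Matrix.of_apply, Matrix.add_apply, Pi.add_apply, Matrix.kroneckerMap_apply,
    Matrix.transpose_apply, Matrix.neg_apply, Matrix.one_apply]
  split_ifs <;> ring

lemma Wmat_mulVec_bigVec (A C : Fin p → Matrix (Fin m) (Fin m) ℝ)
    (B D : Fin p → Matrix (Fin n) (Fin n) ℝ) (X Y : Fin p → Matrix (Fin m) (Fin n) ℝ) :
    Wmat A C B D *ᵥ bigVec X Y =
      bigVec (fun k => A k * X k - Y k * B k) (fun k => C k * X (k + 1) - Y k * D k) := by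
  ext ⟨k, s, ji⟩
  fin_cases s <;>
    simp only [Fin.zero_eta, Fin.mk_one, Fin.isValue, Matrix.mulVec, dotProduct, Wmat,
      Matrix.of_apply, if_true, one_ne_zero, if_false, add_mul, Finset.sum_add_distrib,
      sum_ite_block]
  · change ((1 ⊗ₖ A k) *ᵥ (X k).vec) ji + ((-((B k)ᵀ ⊗ₖ 1)) *ᵥ (Y k).vec) ji =
      (A k * X k - Y k * B k).vec ji
    rw [Matrix.neg_mulVec, Matrix.kronecker_mulVec_vec, Matrix.kronecker_mulVec_vec]
    simp [sub_eq_add_neg]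
  · change ((1 ⊗ₖ C k) *ᵥ (X (k + 1)).vec) ji + ((-((D k)ᵀ ⊗ₖ 1)) *ᵥ (Y k).vec) ji =
      (C k * X (k + 1) - Y k * D k).vec ji
    rw [Matrix.neg_mulVec, Matrix.kronecker_mulVec_vec, Matrix.kronecker_mulVec_vec]
    simp [sub_eq_add_neg]

lemma Hmat_one_mulVec_tvec (X Y : Fin p → Matrix (Fin m) (Fin n) ℝ)
    (dA dC : Fin p → Matrix (Fin m) (Fin m) ℝ) (dB dD : Fin p → Matrix (Fin n) (Fin n) ℝ)
    (dE dF : Fin p → Matrix (Fin m) (Fin n) ℝ) :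
    Hmat X Y 1 1 1 1 1 1 *ᵥ tvec dA dC dB dD dE dF =
      Wmat dA dC dB dD *ᵥ bigVec X Y - bigVec dE dF := by
  rw [Wmat_mulVec_bigVec, ← bigVec_sub]
  ext ⟨k, s, ji⟩
  rw [Matrix.mulVec, dotProduct, Fintype.sum_prod_type]
  simp only [Hmat, Matrix.of_apply, ite_mul, zero_mul, Finset.sum_ite_irrel,
    Finset.sum_const_zero, Finset.sum_ite_eq', Finset.mem_univ, if_true]
  fin_cases s <;>
    simp only [Fin.zero_eta, Fin.mk_one, Fin.isValue, if_true, one_ne_zero, if_false,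
      Fintype.sum_sum_type, Pi.one_apply, one_mul, neg_mul, zero_mul, Finset.sum_neg_distrib,
      Finset.sum_const_zero, zero_add, add_zero]
  · change ((X k)ᵀ ⊗ₖ 1 *ᵥ (dA k).vec) ji + (-((1 ⊗ₖ Y k) *ᵥ (dB k).vec) ji +
        -((1 : Matrix (Fin n × Fin m) (Fin n × Fin m) ℝ) *ᵥ (dE k).vec) ji) =
      (dA k * X k - Y k * dB k - dE k).vec ji
    rw [Matrix.kronecker_mulVec_vec, Matrix.kronecker_mulVec_vec, Matrix.one_mulVec]
    simp [sub_eq_add_neg, add_assoc]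
  · change ((X (k + 1))ᵀ ⊗ₖ 1 *ᵥ (dC k).vec) ji + (-((1 ⊗ₖ Y k) *ᵥ (dD k).vec) ji +
        -((1 : Matrix (Fin n × Fin m) (Fin n × Fin m) ℝ) *ᵥ (dF k).vec) ji) =
      (dC k * X (k + 1) - Y k * dD k - dF k).vec ji
    rw [Matrix.kronecker_mulVec_vec, Matrix.kronecker_mulVec_vec, Matrix.one_mulVec]
    simp [sub_eq_add_neg, add_assoc]

end PGCS

section Tolerances

def tolVec (al be ga ze ta de : Fin p → ℝ) : Fin p × CIdx m n → ℝ := fun y =>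
  match y.2 with
  | Sum.inl _ => al y.1
  | Sum.inr (Sum.inl _) => be y.1
  | Sum.inr (Sum.inr (Sum.inl _)) => ga y.1
  | Sum.inr (Sum.inr (Sum.inr (Sum.inl _))) => ze y.1
  | Sum.inr (Sum.inr (Sum.inr (Sum.inr (Sum.inl _)))) => ta y.1
  | Sum.inr (Sum.inr (Sum.inr (Sum.inr (Sum.inr _)))) => de y.1

lemma sum_sq_vecM_div {a b : ℕ} (M : Matrix (Fin a) (Fin b) ℝ) (c : ℝ) :
    ∑ x, (vecM M x / c) ^ 2 = (frob M / c) ^ 2 := by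
  rw [div_pow, frob, Real.sq_sqrt (by positivity), Finset.sum_comm, Fintype.sum_prod_type,
    Finset.sum_div]
  simp only [div_pow, ← Finset.sum_div, vecM]

lemma sum_sq_tvec_div_tolVec (dA dC : Fin p → Matrix (Fin m) (Fin m) ℝ)
    (dB dD : Fin p → Matrix (Fin n) (Fin n) ℝ) (dE dF : Fin p → Matrix (Fin m) (Fin n) ℝ)
    (al be ga ze ta de : Fin p → ℝ) :
    ∑ y, (tvec dA dC dB dD dE dF y / tolVec al be ga ze ta de y) ^ 2 =
      ∑ k, ((frob (dA k) / al k) ^ 2 + (frob (dB k) / be k) ^ 2 + (frob (dE k) / ga k) ^ 2 +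
        (frob (dC k) / ze k) ^ 2 + (frob (dD k) / ta k) ^ 2 + (frob (dF k) / de k) ^ 2) := by
  rw [Fintype.sum_prod_type]
  refine Finset.sum_congr rfl fun k _ => ?_
  simp only [Fintype.sum_sum_type, tvec, tolVec, sum_sq_vecM_div]
  ring

lemma l2norm_tvec_div_tolVec_le (dA dC : Fin p → Matrix (Fin m) (Fin m) ℝ)
    (dB dD : Fin p → Matrix (Fin n) (Fin n) ℝ) (dE dF : Fin p → Matrix (Fin m) (Fin n) ℝ)
    {al be ga ze ta de : Fin p → ℝ} (hal : ∀ k, 0 ≤ al k) (hbe : ∀ k, 0 ≤ be k)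
    (hga : ∀ k, 0 ≤ ga k) (hze : ∀ k, 0 ≤ ze k) (hta : ∀ k, 0 ≤ ta k) (hde : ∀ k, 0 ≤ de k) :
    l2norm (tvec dA dC dB dD dE dF / tolVec al be ga ze ta de) ≤
      Real.sqrt (6 * (p : ℝ)) * ⨆ k : Fin p,
        max (frob (dA k) / al k) (max (frob (dB k) / be k) (max (frob (dE k) / ga k)
          (max (frob (dC k) / ze k) (max (frob (dD k) / ta k) (frob (dF k) / de k))))) := by
  set r : Fin p → ℝ := fun k =>
    max (frob (dA k) / al k) (max (frob (dB k) / be k) (max (frob (dE k) / ga k)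
      (max (frob (dC k) / ze k) (max (frob (dD k) / ta k) (frob (dF k) / de k)))))
  set ε := ⨆ k, r k
  have hfrob {a b : ℕ} (M : Matrix (Fin a) (Fin b) ℝ) : 0 ≤ frob M := Real.sqrt_nonneg _
  have hε0 : 0 ≤ ε := Real.iSup_nonneg fun k =>
    le_max_of_le_left (div_nonneg (hfrob _) (hal k))
  have hblock (k : Fin p) :
      (frob (dA k) / al k) ^ 2 + (frob (dB k) / be k) ^ 2 + (frob (dE k) / ga k) ^ 2 +
        (frob (dC k) / ze k) ^ 2 + (frob (dD k) / ta k) ^ 2 + (frob (dF k) / de k) ^ 2 ≤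
      6 * ε ^ 2 := by
    obtain ⟨hA, hB, hE, hC, hD, hF⟩ := by
      simpa only [r, max_le_iff] using le_ciSup (Set.finite_range r).bddAbove k
    have hsq {x : ℝ} (h0 : 0 ≤ x) (h : x ≤ ε) : x ^ 2 ≤ ε ^ 2 := pow_le_pow_left₀ h0 h 2
    linarith [hsq (div_nonneg (hfrob _) (hal k)) hA, hsq (div_nonneg (hfrob _) (hbe k)) hB,
      hsq (div_nonneg (hfrob _) (hga k)) hE, hsq (div_nonneg (hfrob _) (hze k)) hC,
      hsq (div_nonneg (hfrob _) (hta k)) hD, hsq (div_nonneg (hfrob _) (hde k)) hF]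
  calc l2norm (tvec dA dC dB dD dE dF / tolVec al be ga ze ta de)
      ≤ Real.sqrt (∑ _k : Fin p, 6 * ε ^ 2) := by
        rw [l2norm]
        simp only [Pi.div_apply, sum_sq_tvec_div_tolVec]
        exact Real.sqrt_le_sqrt (Finset.sum_le_sum fun k _ => hblock k)
    _ = Real.sqrt (6 * p) * ε := by
        rw [Finset.sum_const, Finset.card_univ, Fintype.card_fin, nsmul_eq_mul, ← mul_assoc,
          Real.sqrt_mul' _ (sq_nonneg ε), Real.sqrt_sq hε0, mul_comm (p : ℝ)]

variable [NeZero p]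

lemma Hmat_apply_eq_mul_tolVec (X Y : Fin p → Matrix (Fin m) (Fin n) ℝ)
    (al be ga ze ta de : Fin p → ℝ) (x : BIdx m n p) (y : Fin p × CIdx m n) :
    Hmat X Y al be ga ze ta de x y = Hmat X Y 1 1 1 1 1 1 x y * tolVec al be ga ze ta de y := by
  obtain ⟨k, a | b | e | c | d | f⟩ := y <;>
    simp only [Hmat, tolVec, Matrix.of_apply, Pi.one_apply, one_mul] <;>
    split_ifs <;> subst_vars <;> ring

lemma Hmat_mulVec_tvec_div (X Y : Fin p → Matrix (Fin m) (Fin n) ℝ)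
    (dA dC : Fin p → Matrix (Fin m) (Fin m) ℝ) (dB dD : Fin p → Matrix (Fin n) (Fin n) ℝ)
    (dE dF : Fin p → Matrix (Fin m) (Fin n) ℝ) {al be ga ze ta de : Fin p → ℝ}
    (htol : ∀ y, tolVec (m := m) (n := n) al be ga ze ta de y ≠ 0) :
    Hmat X Y al be ga ze ta de *ᵥ (tvec dA dC dB dD dE dF / tolVec al be ga ze ta de) =
      Wmat dA dC dB dD *ᵥ bigVec X Y - bigVec dE dF := by
  rw [← Hmat_one_mulVec_tvec]
  ext x
  refine Finset.sum_congr rfl fun y _ => ?_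
  beta_reduce
  rw [Hmat_apply_eq_mul_tolVec, Pi.div_apply, mul_assoc, mul_div_cancel₀ _ (htol y)]

end Tolerances

theorem perturbation_bound_H1_general (m n p : ℕ) [NeZero p]
    (A C dA dC : Fin p → Matrix (Fin m) (Fin m) ℝ)
    (B D dB dD : Fin p → Matrix (Fin n) (Fin n) ℝ)
    (E F dE dF X Y dX dY : Fin p → Matrix (Fin m) (Fin n) ℝ)
    (al be ga ze ta de : Fin p → ℝ)
    (hal : ∀ k, 0 < al k) (hbe : ∀ k, 0 < be k) (hga : ∀ k, 0 < ga k)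
    (hze : ∀ k, 0 < ze k) (hta : ∀ k, 0 < ta k) (hde : ∀ k, 0 < de k)
    (hW : IsUnit (Wmat A C B D))
    (hsol : ∀ k : Fin p, A k * X k - Y k * B k = E k ∧ C k * X (k + 1) - Y k * D k = F k)
    (hpert : specNorm ((Wmat A C B D)⁻¹ * Wmat dA dC dB dD) < 1)
    (hperturbed : ∀ k : Fin p,
      (A k + dA k) * (X k + dX k) - (Y k + dY k) * (B k + dB k) = E k + dE k ∧
      (C k + dC k) * (X (k + 1) + dX (k + 1)) - (Y k + dY k) * (D k + dD k) = F k + dF k) :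
    let ε : ℝ := ⨆ k : Fin p,
      max (frob (dA k) / al k) (max (frob (dB k) / be k) (max (frob (dE k) / ga k)
        (max (frob (dC k) / ze k) (max (frob (dD k) / ta k) (frob (dF k) / de k)))))
    l2norm (bigVec dX dY) ≤
      Real.sqrt (6 * (p : ℝ)) *
          specNorm ((Wmat A C B D)⁻¹ * Hmat X Y al be ga ze ta de) * ε /
        (1 - specNorm ((Wmat A C B D)⁻¹ * Wmat dA dC dB dD)) := by
  intro ε
  have htol : ∀ y, tolVec (m := m) (n := n) al be ga ze ta de y ≠ 0 := by
    rintro ⟨k, _ | _ | _ | _ | _ | _⟩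
    exacts [(hal k).ne', (hbe k).ne', (hga k).ne', (hze k).ne', (hta k).ne', (hde k).ne']
  have hz : Wmat A C B D *ᵥ bigVec X Y = bigVec E F := by
    rw [Wmat_mulVec_bigVec]
    congr 1 <;> funext k
    exacts [(hsol k).1, (hsol k).2]
  have hdz : (Wmat A C B D + Wmat dA dC dB dD) *ᵥ (bigVec X Y + bigVec dX dY) =
      bigVec E F + bigVec dE dF := by
    rw [← Wmat_add, ← bigVec_add, ← bigVec_add, Wmat_mulVec_bigVec]
    congr 1 <;> funext k
    exacts [(hperturbed k).1, (hperturbed k).2]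
  have hu := l2norm_tvec_div_tolVec_le dA dC dB dD dE dF (fun k => (hal k).le)
    (fun k => (hbe k).le) (fun k => (hga k).le) (fun k => (hze k).le) (fun k => (hta k).le)
    (fun k => (hde k).le)
  calc l2norm (bigVec dX dY)
      ≤ specNorm ((Wmat A C B D)⁻¹ * Hmat X Y al be ga ze ta de) *
          l2norm (tvec dA dC dB dD dE dF / tolVec al be ga ze ta de) /
            (1 - specNorm ((Wmat A C B D)⁻¹ * Wmat dA dC dB dD)) :=
        l2norm_le_of_perturbed hW hz hdz (Hmat_mulVec_tvec_div X Y dA dC dB dD dE dF htol) hpert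
    _ ≤ specNorm ((Wmat A C B D)⁻¹ * Hmat X Y al be ga ze ta de) * (Real.sqrt (6 * p) * ε) /
            (1 - specNorm ((Wmat A C B D)⁻¹ * Wmat dA dC dB dD)) := by
        gcongr
        exact specNorm_nonneg _
    _ = _ := by ring

/-- first-order normwise perturbation bound
`‖Δz‖₂ ≤ √(6p) ‖W⁻¹H₁‖₂ ε / (1 − ‖W⁻¹ΔW‖₂)`. -/
theorem perturbation_bound_H1 (m n p : ℕ) [NeZero m] [NeZero n] [NeZero p]
    (A C dA dC : Fin p → Matrix (Fin m) (Fin m) ℝ)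
    (B D dB dD : Fin p → Matrix (Fin n) (Fin n) ℝ)
    (E F dE dF X Y dX dY : Fin p → Matrix (Fin m) (Fin n) ℝ)
    (al be ga ze ta de : Fin p → ℝ)
    (hal : ∀ k, 0 < al k) (hbe : ∀ k, 0 < be k) (hga : ∀ k, 0 < ga k)
    (hze : ∀ k, 0 < ze k) (hta : ∀ k, 0 < ta k) (hde : ∀ k, 0 < de k)
    (hW : IsUnit (Wmat A C B D))
    (hsol : ∀ k : Fin p, A k * X k - Y k * B k = E k ∧ C k * X (k + 1) - Y k * D k = F k)
    (hpert : specNorm ((Wmat A C B D)⁻¹ * Wmat dA dC dB dD) < 1)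
    (hperturbed : ∀ k : Fin p,
      (A k + dA k) * (X k + dX k) - (Y k + dY k) * (B k + dB k) = E k + dE k ∧
      (C k + dC k) * (X (k + 1) + dX (k + 1)) - (Y k + dY k) * (D k + dD k) = F k + dF k) :
    let ε : ℝ := ⨆ k : Fin p,
      max (frob (dA k) / al k) (max (frob (dB k) / be k) (max (frob (dE k) / ga k)
        (max (frob (dC k) / ze k) (max (frob (dD k) / ta k) (frob (dF k) / de k)))))
    l2norm (bigVec dX dY) ≤
      Real.sqrt (6 * (p : ℝ)) *
          specNorm ((Wmat A C B D)⁻¹ * Hmat X Y al be ga ze ta de) * ε /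
        (1 - specNorm ((Wmat A C B D)⁻¹ * Wmat dA dC dB dD)) :=
  perturbation_bound_H1_general m n p A C dA dC B D dB dD E F dE dF X Y dX dY al be ga ze ta de hal
    hbe hga hze hta hde hW hsol hpert hperturbed
end
end

section
/- The set 𝒟 is open in ℝ^{2p(m²+n²+mn)}, and the map Ψ is Fréchet differentiable at every t ∈ 𝒟 with Fréchet derivative DΨ(t) = −W(t)⁻¹ H₂(t). -/
open Matrix
open scoped Kronecker

noncomputable section

variable {m n p : ℕ}

/-! Since `W` and `g` are linear in `t`, the set `𝒟` is the preimage of the open set of units,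
and the derivative of matrix inversion, `h ↦ -W⁻¹ h W⁻¹`, gives
`DΨ(t) h = W(t)⁻¹ (g(h) - W(h) Ψ(t))`. For fixed `z` the residual `W(t) z - g(t)` is linear in
`t`, and `H₂(t)` is exactly its matrix at `z = Ψ(t)`: `H₂(t) h = W(h) Ψ(t) - g(h)`. -/

-- Any norm on the finite-dimensional space of matrices will do; this one makes it a normed algebra.
attribute [local instance] Matrix.linftyOpNormedRing Matrix.linftyOpNormedAlgebra

section InverseMulVec

variable {𝕜 E ι : Type*} [RCLike 𝕜]
  [NormedAddCommGroup E] [NormedSpace 𝕜 E] [Fintype ι] [DecidableEq ι]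

theorem HasFDerivAt.inv_mulVec {W : E → Matrix ι ι 𝕜} {g : E → ι → 𝕜}
    {W' : E →L[𝕜] Matrix ι ι 𝕜} {g' : E →L[𝕜] ι → 𝕜} {L : E →L[𝕜] ι → 𝕜} {t : E}
    (hW : HasFDerivAt W W' t) (hg : HasFDerivAt g g' t) (ht : IsUnit (W t))
    (hL : ∀ h, L h = (W t)⁻¹ *ᵥ (g' h - W' h *ᵥ ((W t)⁻¹ *ᵥ g t))) :
    HasFDerivAt (fun s => (W s)⁻¹ *ᵥ g s) L t := by
  have hinv : HasFDerivAt (fun s => (W s)⁻¹)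
      ((-ContinuousLinearMap.mulLeftRight 𝕜 _ (W t)⁻¹ (W t)⁻¹).comp W') t := by
    have h := hasFDerivAt_ringInverse (𝕜 := 𝕜) ht.unit
    rw [Matrix.coe_units_inv, ht.unit_spec] at h
    simpa only [Function.comp_def, ← Matrix.nonsing_inv_eq_ringInverse] using h.comp t hW
  refine (Matrix.mulVecBilin 𝕜 𝕜 : Matrix ι ι 𝕜 →ₗ[𝕜] _).toContinuousBilinearMap
    |>.hasFDerivAt_of_bilinear hinv hg |>.congr_fderiv (ContinuousLinearMap.ext fun h => ?_)
  change (W t)⁻¹ *ᵥ g' h + (-((W t)⁻¹ * W' h * (W t)⁻¹)) *ᵥ g t = _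
  rw [hL, Matrix.mulVec_sub, Matrix.neg_mulVec, ← Matrix.mulVec_mulVec, ← Matrix.mulVec_mulVec,
    sub_eq_add_neg]

end InverseMulVec

theorem Wt_isLinearMap [NeZero p] : IsLinearMap ℝ (Wt : (Fin p × CIdx m n → ℝ) → _) := by
  constructor <;>
  · intros
    ext ⟨k, b, j, i⟩ ⟨k', b', j', i'⟩
    simp only [Wt, Wmat, pA, pB, pC, pD, Matrix.of_apply, Matrix.add_apply, Matrix.smul_apply,
      Matrix.neg_apply, Matrix.kroneckerMap_apply, Matrix.transpose_apply, Pi.add_apply,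
      Pi.smul_apply, smul_eq_mul]
    split_ifs <;> ring

theorem gt_isLinearMap : IsLinearMap ℝ (gt : (Fin p × CIdx m n → ℝ) → BIdx m n p → ℝ) := by
  constructor <;>
  · intros
    funext ⟨k, b, j, i⟩
    simp only [gt, bigVec, vecM, pE, pF, Matrix.of_apply, Pi.add_apply, Pi.smul_apply, smul_eq_mul]
    split_ifs <;> ring

theorem Hmat_one_mulVec [NeZero p] (z : BIdx m n p → ℝ) (h : Fin p × CIdx m n → ℝ) :
    Hmat (fun k => Matrix.of fun i j => z (k, 0, (j, i)))
      (fun k => Matrix.of fun i j => z (k, 1, (j, i))) 1 1 1 1 1 1 *ᵥ h = Wt h *ᵥ z - gt h := by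
  funext ⟨k, b, j, i⟩
  fin_cases b <;>
  · simp only [Hmat, Wt, Wmat, gt, bigVec, vecM, pA, pB, pC, pD, pE, pF, mulVec, dotProduct,
      of_apply, kroneckerMap_apply, transpose_apply, Matrix.neg_apply, Matrix.one_apply,
      Pi.one_apply, Pi.sub_apply, Fin.isValue, Fin.zero_eta, Fin.mk_one, zero_ne_one, one_ne_zero,
      ↓reduceIte, ite_and, ite_self, mul_ite, ite_mul, mul_one, mul_zero, one_mul, zero_mul, neg_mul,
      add_zero, zero_add, Fintype.sum_prod_type, Fintype.sum_sum_type, Fin.sum_univ_two,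
      Finset.sum_ite_irrel, Finset.sum_ite_eq, Finset.sum_ite_eq', Finset.mem_univ,
      Finset.sum_neg_distrib, Finset.sum_const_zero, Finset.sum_add_distrib, mul_comm (h _)]
    ring

theorem Psi_hasFDerivAt_general (m n p : ℕ) [NeZero p] :
    IsOpen (Dset m n p) ∧
      ∀ t ∈ Dset m n p,
        HasFDerivAt Psi
          (LinearMap.toContinuousLinearMap
            (Matrix.mulVecLin (-((Wt t)⁻¹ * H2t t)))) t := by
  let W' := LinearMap.toContinuousLinearMap (Wt_isLinearMap.mk' (Wt : _ → Matrix (BIdx m n p) _ ℝ))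
  let g' := LinearMap.toContinuousLinearMap (gt_isLinearMap.mk' (gt : _ → BIdx m n p → ℝ))
  refine ⟨Units.isOpen.preimage W'.continuous, fun t ht => ?_⟩
  refine W'.hasFDerivAt.inv_mulVec g'.hasFDerivAt ht fun h => ?_
  have hH : H2t t *ᵥ h = Wt h *ᵥ Psi t - gt h := Hmat_one_mulVec (Psi t) h
  simp only [W', g', LinearMap.coe_toContinuousLinearMap', IsLinearMap.mk'_apply, mulVecLin_apply,
    Matrix.neg_mulVec, ← mulVec_mulVec, hH, ← mulVec_neg, neg_sub, Psi]

/-- the set `𝒟` is open and `Ψ` is Fréchet differentiable on `𝒟` with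
derivative `DΨ(t) = −W(t)⁻¹ H₂(t)`. -/
theorem Psi_hasFDerivAt (m n p : ℕ) [NeZero m] [NeZero n] [NeZero p] :
    IsOpen (Dset m n p) ∧
      ∀ t ∈ Dset m n p,
        HasFDerivAt Psi
          (LinearMap.toContinuousLinearMap
            (Matrix.mulVecLin (-((Wt t)⁻¹ * H2t t)))) t :=
  Psi_hasFDerivAt_general m n p
end
end

section
/- Let t ∈ 𝒟 with z = Ψ(t) ≠ 0. Then, as ε → 0⁺, the quantity sup{ (‖Ψ(x) − Ψ(t)‖∞ / ‖Ψ(t)‖∞)/d(x,t) : x ∈ B⁰(t,ε) ∩ 𝒟, x ≠ t } converges to ‖ |W(t)⁻¹ H₂(t)| |t| ‖∞ / ‖z‖∞. -/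
open Matrix
open scoped Kronecker

noncomputable section

variable {m n p : ℕ}

set_option maxHeartbeats 2000000 in
set_option synthInstance.maxHeartbeats 200000 in
lemma key1 [NeZero m] [NeZero n] [NeZero p] (z : BIdx m n p → ℝ) (u : Fin p × CIdx m n → ℝ) :
    Hmat (fun k => Matrix.of fun i j => z (k, (0:Fin 2), (j, i)))
         (fun k => Matrix.of fun i j => z (k, (1:Fin 2), (j, i))) 1 1 1 1 1 1 *ᵥ u
      = Wt u *ᵥ z - gt u := by
  ext ⟨k, b, j, i⟩
  fin_cases b <;>
  simp [Matrix.mulVec, dotProduct, Hmat, Wt, Wmat, gt, bigVec, pA, pB, pC, pD, pE, pF,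
    Fintype.sum_prod_type, Fintype.sum_sum_type, Fin.mk_zero, Fin.mk_one,
    Fin.sum_univ_two, Matrix.one_apply, vecM, Prod.ext_iff, Finset.sum_add_distrib,
    ite_and, mul_ite, ite_mul, Finset.sum_ite_eq, Finset.sum_ite_eq', mul_comm] <;> ring

section Helpers
variable {ι : Type*} [Fintype ι]

lemma le_linf' (v : ι → ℝ) (i : ι) : |v i| ≤ linf v :=
  le_ciSup (f := fun i => |v i|) (Set.Finite.bddAbove (Set.finite_range _)) i

lemma linf_le' [Nonempty ι] {v : ι → ℝ} {c : ℝ} (h : ∀ i, |v i| ≤ c) : linf v ≤ c :=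
  ciSup_le h

lemma linf_nonneg' [Nonempty ι] (v : ι → ℝ) : 0 ≤ linf v :=
  le_trans (abs_nonneg _) (le_linf' v (Classical.arbitrary ι))

lemma linf_pos' [Nonempty ι] {v : ι → ℝ} (h : v ≠ 0) : 0 < linf v := by
  obtain ⟨i, hi⟩ := Function.ne_iff.1 h
  exact lt_of_lt_of_le (abs_pos.2 hi) (le_linf' v i)

lemma le_cdist' (x a : ι → ℝ) (i : ι) :
    (if a i = 0 then |x i - a i| else |x i - a i| / |a i|) ≤ cdist x a :=
  le_ciSup (f := fun i => if a i = 0 then |x i - a i| else |x i - a i| / |a i|)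
    (Set.Finite.bddAbove (Set.finite_range _)) i

lemma cdist_le' [Nonempty ι] {x a : ι → ℝ} {c : ℝ}
    (h : ∀ i, (if a i = 0 then |x i - a i| else |x i - a i| / |a i|) ≤ c) : cdist x a ≤ c :=
  ciSup_le h

end Helpers

section Core
variable [NeZero m] [NeZero n] [NeZero p]

lemma H2t_mulVec (t u : Fin p × CIdx m n → ℝ) :
    H2t t *ᵥ u = Wt u *ᵥ Psi t - gt u := key1 (Psi t) u

lemma Wt_mulVec_Psi {t : Fin p × CIdx m n → ℝ} (ht : IsUnit (Wt t)) :
    Wt t *ᵥ Psi t = gt t := by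
  have hd : IsUnit (Wt t).det := (Matrix.isUnit_iff_isUnit_det _).1 ht
  unfold Psi
  rw [Matrix.mulVec_mulVec, Matrix.mul_nonsing_inv _ hd, Matrix.one_mulVec]

lemma psi_sub {x t : Fin p × CIdx m n → ℝ} (hx : IsUnit (Wt x)) (ht : IsUnit (Wt t)) :
    (fun i => Psi x i - Psi t i) = -(((Wt x)⁻¹ * H2t t) *ᵥ (x - t)) := by
  have hdx : IsUnit (Wt x).det := (Matrix.isUnit_iff_isUnit_det _).1 hx
  have h1 : H2t t *ᵥ (x - t) = Wt x *ᵥ Psi t - gt x := by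
    rw [Matrix.mulVec_sub, H2t_mulVec, H2t_mulVec, Wt_mulVec_Psi ht]
    abel
  have h2 : Wt x *ᵥ (Psi x - Psi t) = -(H2t t *ᵥ (x - t)) := by
    rw [Matrix.mulVec_sub, Wt_mulVec_Psi hx, h1]
    abel
  have h3 : Psi x - Psi t = (Wt x)⁻¹ *ᵥ (Wt x *ᵥ (Psi x - Psi t)) := by
    rw [Matrix.mulVec_mulVec, Matrix.nonsing_inv_mul _ hdx, Matrix.one_mulVec]
  have : Psi x - Psi t = -(((Wt x)⁻¹ * H2t t) *ᵥ (x - t)) := by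
    rw [h3, h2, Matrix.mulVec_neg, Matrix.mulVec_mulVec]
  exact funext fun i => congrFun this i

lemma Wt_add (x y : Fin p × CIdx m n → ℝ) : Wt (x + y) = Wt x + Wt y := by
  ext ⟨k, b, j, i⟩ ⟨l, c⟩
  simp only [Wt, Wmat, pA, pB, pC, pD, Matrix.of_apply, Matrix.add_apply,
    Matrix.kroneckerMap_apply, Matrix.one_apply, Matrix.neg_apply, Matrix.transpose_apply,
    Pi.add_apply]
  split_ifs <;> ring

lemma Wt_smul (c : ℝ) (x : Fin p × CIdx m n → ℝ) : Wt (c • x) = c • Wt x := by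
  ext ⟨k, b, j, i⟩ ⟨l, cc⟩
  simp only [Wt, Wmat, pA, pB, pC, pD, Matrix.of_apply, Matrix.smul_apply,
    Matrix.kroneckerMap_apply, Matrix.one_apply, Matrix.neg_apply, Matrix.transpose_apply,
    Pi.smul_apply, smul_eq_mul]
  split_ifs <;> ring

lemma Wt_cont : Continuous (Wt : (Fin p × CIdx m n → ℝ) → Matrix (BIdx m n p) (BIdx m n p) ℝ) :=
  (IsLinearMap.mk' Wt ⟨Wt_add, Wt_smul⟩ : _ →ₗ[ℝ] _).continuous_of_finiteDimensional

lemma Wt_inv_contAt {t : Fin p × CIdx m n → ℝ} (ht : IsUnit (Wt t)) :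
    ContinuousAt (fun x => (Wt x)⁻¹) t := by
  have hd : (Wt t).det ≠ 0 := by
    have := (Matrix.isUnit_iff_isUnit_det _).1 ht
    exact this.ne_zero
  have h1 : ContinuousAt Ring.inverse (Wt t).det := by
    rw [Ring.inverse_eq_inv']
    exact continuousAt_inv₀ hd
  exact (continuousAt_matrix_inv _ h1).comp Wt_cont.continuousAt

end Core

set_option maxHeartbeats 2000000 in
/-- the mixed condition number of `Ψ` at `t` equals
`‖ |W(t)⁻¹H₂(t)| |t| ‖∞ / ‖Ψ(t)‖∞`. -/
theorem mixed_condition_number (m n p : ℕ) [NeZero m] [NeZero n] [NeZero p]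
    (t : Fin p × CIdx m n → ℝ) (ht : t ∈ Dset m n p) (hz : Psi t ≠ 0) :
    Filter.Tendsto
      (fun ε : ℝ => sSup {q : ℝ | ∃ x, x ∈ B0 t ε ∩ Dset m n p ∧ x ≠ t ∧
        q = linf (fun i => Psi x i - Psi t i) / linf (Psi t) / cdist x t})
      (nhdsWithin 0 (Set.Ioi 0))
      (nhds (linf ((matAbs ((Wt t)⁻¹ * H2t t)).mulVec (fun j => |t j|)) /
        linf (Psi t))) := by
  classical
  have htu : IsUnit (Wt t) := ht
  set Mt := (Wt t)⁻¹ * H2t t with hMtdef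
  set P := linf (Psi t) with hPdef
  have hP : 0 < P := linf_pos' hz
  set aT : (Fin p × CIdx m n) → ℝ := fun j => |t j| with haT
  set N := linf ((matAbs Mt).mulVec aT) with hNdef
  -- t ≠ 0
  have htne : t ≠ 0 := by
    intro h0
    apply hz
    have hg : gt t = 0 := by
      funext x
      rcases x with ⟨k, b, j, i⟩
      simp only [gt, bigVec, pE, pF, vecM, h0, Pi.zero_apply, Matrix.of_apply]
      split_ifs <;> rfl
    unfold Psi
    rw [hg, Matrix.mulVec_zero]
  obtain ⟨j₀, hj₀⟩ := Function.ne_iff.1 htne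
  have hj₀' : t j₀ ≠ 0 := by simpa using hj₀
  -- row maximum
  obtain ⟨i₀, -, hi₀⟩ := Finset.exists_max_image Finset.univ
    (fun i => ((matAbs Mt).mulVec aT) i) ⟨default, Finset.mem_univ _⟩
  have hvnn : ∀ i, 0 ≤ ((matAbs Mt).mulVec aT) i := by
    intro i
    apply Finset.sum_nonneg
    intro j _
    exact mul_nonneg (abs_nonneg _) (abs_nonneg _)
  have hNnn : 0 ≤ N := linf_nonneg' _
  have hNv : N = ((matAbs Mt).mulVec aT) i₀ := by
    apply le_antisymm
    · exact linf_le' fun i => by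
        rw [abs_of_nonneg (hvnn i)]; exact hi₀ i (Finset.mem_univ i)
    · have h := le_linf' ((matAbs Mt).mulVec aT) i₀
      rwa [abs_of_nonneg (hvnn i₀)] at h
  have hvleN : ∀ i, ((matAbs Mt).mulVec aT) i ≤ N := by
    intro i; rw [hNv]; exact hi₀ i (Finset.mem_univ i)
  -- sign vector
  set s : (Fin p × CIdx m n) → ℝ := fun j => if 0 ≤ Mt i₀ j then |t j| else -|t j| with hs
  have hsabs : ∀ j, |s j| = |t j| := by
    intro j; rw [hs]; dsimp only; split_ifs <;> simp
  set Sabs := ∑ j, |t j| with hSabsdef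
  have hSnn : 0 ≤ Sabs := Finset.sum_nonneg fun j _ => abs_nonneg _
  have hMts : (Mt *ᵥ s) i₀ = N := by
    rw [hNv]
    simp only [Matrix.mulVec, dotProduct, matAbs, Matrix.map_apply]
    apply Finset.sum_congr rfl
    intro j _
    rw [hs]; dsimp only
    split_ifs with h
    · rw [abs_of_nonneg h]
    · rw [abs_of_neg (lt_of_not_ge h)]; ring
  -- continuity of x ↦ (Wt x)⁻¹ * H2t t
  have hMcont : ContinuousAt (fun x => (Wt x)⁻¹ * H2t t) t :=
    ((continuous_id.matrix_mul continuous_const).continuousAt).comp (Wt_inv_contAt htu)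
  have hev : ∀ θ : ℝ, 0 < θ → ∃ δc > 0, ∀ x : Fin p × CIdx m n → ℝ, dist x t < δc →
      ∀ i jj, |((Wt x)⁻¹ * H2t t) i jj - Mt i jj| ≤ θ := by
    intro θ hθ
    have hall : ∀ᶠ x in nhds t, ∀ ij : (BIdx m n p) × (Fin p × CIdx m n),
        |((Wt x)⁻¹ * H2t t) ij.1 ij.2 - Mt ij.1 ij.2| ≤ θ := by
      rw [Filter.eventually_all]
      intro ij
      have hc : ContinuousAt (fun x => ((Wt x)⁻¹ * H2t t) ij.1 ij.2) t :=
        ((continuous_id.matrix_elem ij.1 ij.2).continuousAt).comp hMcont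
      have hmem : ∀ᶠ x in nhds t,
          ((Wt x)⁻¹ * H2t t) ij.1 ij.2 ∈ Metric.ball (((Wt t)⁻¹ * H2t t) ij.1 ij.2) θ :=
        hc.eventually_mem (Metric.ball_mem_nhds (((Wt t)⁻¹ * H2t t) ij.1 ij.2) hθ)
      refine hmem.mono ?_
      intro x hx
      have h2 : dist (((Wt x)⁻¹ * H2t t) ij.1 ij.2) (((Wt t)⁻¹ * H2t t) ij.1 ij.2) < θ :=
        Metric.mem_ball.1 hx
      rw [Real.dist_eq] at h2
      exact le_of_lt h2
    obtain ⟨δc, hδc, hh⟩ := Metric.eventually_nhds_iff.1 hall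
    exact ⟨δc, hδc, fun x hx i jj => hh hx (i, jj)⟩
  -- the perturbation path stays in Dset
  have hpath : ∃ ε₁ > 0, ∀ ε : ℝ, |ε| < ε₁ → IsUnit (Wt (t + ε • s)) := by
    have hc : ContinuousAt (fun ε : ℝ => (Wt (t + ε • s)).det) 0 :=
      ((Wt_cont.comp (continuous_const.add (continuous_id.smul continuous_const))).matrix_det).continuousAt
    have h0 : (Wt (t + (0:ℝ) • s)).det ∈ {y : ℝ | y ≠ 0} := by
      simpa using ((Matrix.isUnit_iff_isUnit_det _).1 htu).ne_zero
    have hev0 : ∀ᶠ ε in nhds (0:ℝ), (Wt (t + ε • s)).det ≠ 0 :=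
      hc (isOpen_compl_singleton.mem_nhds h0)
    obtain ⟨ε₁, hε₁, hh⟩ := Metric.eventually_nhds_iff.1 hev0
    refine ⟨ε₁, hε₁, fun ε hε => ?_⟩
    have h3 := hh (show dist ε (0:ℝ) < ε₁ by rwa [Real.dist_eq, sub_zero])
    exact (Matrix.isUnit_iff_isUnit_det _).2 (isUnit_iff_ne_zero.2 h3)
  -- main estimate
  rw [Metric.tendsto_nhdsWithin_nhds]
  intro η hη
  have hden : (0:ℝ) < 2 * (Sabs + 1) := by linarith
  set θ := η * P / (2 * (Sabs + 1)) with hθdef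
  have hθ : 0 < θ := div_pos (mul_pos hη hP) hden
  obtain ⟨δc, hδc, hent⟩ := hev θ hθ
  obtain ⟨ε₁, hε₁, hunit⟩ := hpath
  set T := linf t with hTdef
  have hTnn : 0 ≤ T := linf_nonneg' t
  have hT1 : (0:ℝ) < T + 1 := by linarith
  refine ⟨min (δc / (T + 1)) ε₁, lt_min (div_pos hδc hT1) hε₁, ?_⟩
  intro ε hεIoi hεd
  rw [Real.dist_eq, sub_zero] at hεd
  have hε : 0 < ε := hεIoi
  have hεabs : |ε| = ε := abs_of_pos hε
  have hεδ : ε < δc / (T + 1) := by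
    have := lt_of_lt_of_le hεd (min_le_left _ _); rwa [hεabs] at this
  have hεε₁ : |ε| < ε₁ := lt_of_lt_of_le hεd (min_le_right _ _)
  -- B0 t ε is inside the δc-ball
  have hdistB : ∀ x ∈ B0 t ε, dist x t < δc := by
    intro x hx
    have hle : dist x t ≤ ε * T := by
      rw [dist_pi_le_iff (by positivity)]
      intro j
      rw [Real.dist_eq]
      exact le_trans (hx j) (mul_le_mul_of_nonneg_left (le_linf' t j) hε.le)
    calc dist x t ≤ ε * T := hle
      _ ≤ ε * (T + 1) := by nlinarith
      _ < (δc / (T + 1)) * (T + 1) := by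
          exact mul_lt_mul_of_pos_right hεδ hT1
      _ = δc := div_mul_cancel₀ _ (ne_of_gt hT1)
  set U := (N + θ * Sabs) / P with hUdef
  -- upper bound for every element of the set
  have hup : ∀ q ∈ {q : ℝ | ∃ x, x ∈ B0 t ε ∩ Dset m n p ∧ x ≠ t ∧
      q = linf (fun i => Psi x i - Psi t i) / linf (Psi t) / cdist x t}, q ≤ U := by
    rintro q ⟨x, ⟨hxB, hxD⟩, hxne, rfl⟩
    have hxDu : IsUnit (Wt x) := hxD
    set c := cdist x t with hc
    have hδj : ∀ j, |x j - t j| ≤ c * |t j| := by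
      intro j
      by_cases h : t j = 0
      · have h1 := hxB j
        rw [h, abs_zero, mul_zero] at h1 ⊢
        exact h1
      · have h1 := le_cdist' x t j
        rw [if_neg h] at h1
        have h2 : |x j - t j| = (|x j - t j| / |t j|) * |t j| :=
          (div_mul_cancel₀ _ (abs_ne_zero.2 h)).symm
        rw [h2]
        exact mul_le_mul_of_nonneg_right h1 (abs_nonneg _)
    have hc0 : 0 < c := by
      obtain ⟨j, hj⟩ := Function.ne_iff.1 hxne
      have hjt : t j ≠ 0 := by
        intro h
        apply hj
        have h1 := hxB j
        rw [h, abs_zero, mul_zero, sub_zero] at h1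
        have h2 : x j = 0 := abs_eq_zero.1 (le_antisymm h1 (abs_nonneg _))
        rw [h2, h]
      have h1 := le_cdist' x t j
      rw [if_neg hjt] at h1
      exact lt_of_lt_of_le (div_pos (abs_pos.2 (sub_ne_zero.2 hj)) (abs_pos.2 hjt)) h1
    have hMx : ∀ i jj, |((Wt x)⁻¹ * H2t t) i jj| ≤ |Mt i jj| + θ := by
      intro i jj
      have h1 := hent x (hdistB x hxB) i jj
      calc |((Wt x)⁻¹ * H2t t) i jj|
          = |Mt i jj + (((Wt x)⁻¹ * H2t t) i jj - Mt i jj)| := by ring_nf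
        _ ≤ |Mt i jj| + |((Wt x)⁻¹ * H2t t) i jj - Mt i jj| := abs_add_le _ _
        _ ≤ |Mt i jj| + θ := by linarith
    have hnum : ∀ i, |Psi x i - Psi t i| ≤ c * (N + θ * Sabs) := by
      intro i
      have hps := psi_sub hxDu htu
      have heq : Psi x i - Psi t i = -((((Wt x)⁻¹ * H2t t) *ᵥ (x - t)) i) := by
        have := congrFun hps i
        simpa using this
      rw [heq, abs_neg]
      have hb1 : |(((Wt x)⁻¹ * H2t t) *ᵥ (x - t)) i|
          ≤ ∑ j, |((Wt x)⁻¹ * H2t t) i j| * |x j - t j| := by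
        simp only [Matrix.mulVec, dotProduct, Pi.sub_apply]
        refine le_trans (Finset.abs_sum_le_sum_abs _ _) (le_of_eq ?_)
        apply Finset.sum_congr rfl
        intro j _
        rw [abs_mul]
      have hb2 : ∑ j, |((Wt x)⁻¹ * H2t t) i j| * |x j - t j|
          ≤ ∑ j, (|Mt i j| + θ) * (c * |t j|) := by
        apply Finset.sum_le_sum
        intro j _
        exact mul_le_mul (hMx i j) (hδj j) (abs_nonneg _)
          (by positivity)
      have hb3 : ∑ j, (|Mt i j| + θ) * (c * |t j|)
          = c * (((matAbs Mt).mulVec aT) i) + (θ * c) * Sabs := by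
        simp only [Matrix.mulVec, dotProduct, matAbs, Matrix.map_apply, haT,
          hSabsdef, Finset.mul_sum]
        rw [← Finset.sum_add_distrib]
        apply Finset.sum_congr rfl
        intro j _
        ring
      have hb4 : c * (((matAbs Mt).mulVec aT) i) + (θ * c) * Sabs ≤ c * (N + θ * Sabs) := by
        have := hvleN i
        nlinarith
      linarith
    have hlinf : linf (fun i => Psi x i - Psi t i) ≤ c * (N + θ * Sabs) :=
      linf_le' hnum
    rw [div_div, hUdef]
    rw [div_le_div_iff₀ (by positivity) hP]
    calc linf (fun i => Psi x i - Psi t i) * P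
        ≤ (c * (N + θ * Sabs)) * P := by
          apply mul_le_mul_of_nonneg_right hlinf hP.le
      _ = (N + θ * Sabs) * (P * c) := by ring
  -- the witness
  set xw := t + ε • s with hxwdef
  have hxwδ : ∀ j, xw j - t j = ε * s j := by
    intro j; simp [hxwdef]
  have hxwB : xw ∈ B0 t ε := by
    intro j
    rw [hxwδ j, abs_mul, hεabs, hsabs j]
  have hxwD : IsUnit (Wt xw) := hunit ε hεε₁
  have hsj₀ : s j₀ ≠ 0 := by
    rw [hs]; dsimp only; split_ifs <;> simp [hj₀']
  have hxwne : xw ≠ t := by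
    intro h
    have h1 := congrFun h j₀
    have h2 : xw j₀ - t j₀ = 0 := by rw [h1]; ring
    rw [hxwδ j₀] at h2
    exact hsj₀ (by
      rcases mul_eq_zero.1 h2 with h | h
      · exact absurd h (ne_of_gt hε)
      · exact h)
  have hcw : cdist xw t = ε := by
    apply le_antisymm
    · apply cdist_le'
      intro j
      split_ifs with h
      · rw [hxwδ j, abs_mul, hεabs, hsabs j, h, abs_zero, mul_zero]
        exact hε.le
      · rw [hxwδ j, abs_mul, hεabs, hsabs j, div_le_iff₀ (abs_pos.2 h)]
    · have h1 := le_cdist' xw t j₀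
      rw [if_neg hj₀'] at h1
      rw [hxwδ j₀, abs_mul, hεabs, hsabs j₀, mul_div_assoc,
        div_self (abs_ne_zero.2 hj₀'), mul_one] at h1
      exact h1
  -- lower bound on witness value
  have hMws : N - θ * Sabs ≤ (((Wt xw)⁻¹ * H2t t) *ᵥ s) i₀ := by
    have hd : |(((Wt xw)⁻¹ * H2t t) *ᵥ s) i₀ - (Mt *ᵥ s) i₀| ≤ θ * Sabs := by
      have : (((Wt xw)⁻¹ * H2t t) *ᵥ s) i₀ - (Mt *ᵥ s) i₀
          = ∑ j, (((Wt xw)⁻¹ * H2t t) i₀ j - Mt i₀ j) * s j := by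
        simp only [Matrix.mulVec, dotProduct, ← Finset.sum_sub_distrib]
        apply Finset.sum_congr rfl
        intro j _
        ring
      rw [this]
      calc |∑ j, (((Wt xw)⁻¹ * H2t t) i₀ j - Mt i₀ j) * s j|
          ≤ ∑ j, |(((Wt xw)⁻¹ * H2t t) i₀ j - Mt i₀ j) * s j| :=
            Finset.abs_sum_le_sum_abs _ _
        _ ≤ ∑ j, θ * |t j| := by
            apply Finset.sum_le_sum
            intro j _
            rw [abs_mul, hsabs j]
            exact mul_le_mul_of_nonneg_right (hent xw (hdistB xw hxwB) i₀ j) (abs_nonneg _)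
        _ = θ * Sabs := by rw [hSabsdef, Finset.mul_sum]
    have := abs_le.1 hd
    linarith [hMts, this.1]
  have hwnum : ε * (N - θ * Sabs) ≤ linf (fun i => Psi xw i - Psi t i) := by
    have hps := psi_sub hxwD htu
    have heq : Psi xw i₀ - Psi t i₀ = -((((Wt xw)⁻¹ * H2t t) *ᵥ (xw - t)) i₀) := by
      have := congrFun hps i₀
      simpa using this
    have hδs : (xw - t) = ε • s := by
      funext j; simp [hxwδ j]
    have h1 : (((Wt xw)⁻¹ * H2t t) *ᵥ (xw - t)) i₀ = ε * (((Wt xw)⁻¹ * H2t t) *ᵥ s) i₀ := by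
      rw [hδs]
      simp only [Matrix.mulVec, dotProduct, Pi.smul_apply, smul_eq_mul, Finset.mul_sum]
      apply Finset.sum_congr rfl
      intro j _
      ring
    have h2 : ε * (N - θ * Sabs) ≤ |Psi xw i₀ - Psi t i₀| := by
      rw [heq, abs_neg, h1, abs_mul, hεabs]
      apply mul_le_mul_of_nonneg_left (le_trans hMws (le_abs_self _)) hε.le
    exact le_trans h2 (le_linf' (fun i => Psi xw i - Psi t i) i₀)
  -- assemble
  have hSetNe : {q : ℝ | ∃ x, x ∈ B0 t ε ∩ Dset m n p ∧ x ≠ t ∧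
      q = linf (fun i => Psi x i - Psi t i) / linf (Psi t) / cdist x t}.Nonempty :=
    ⟨_, xw, ⟨hxwB, hxwD⟩, hxwne, rfl⟩
  have hbdd : BddAbove {q : ℝ | ∃ x, x ∈ B0 t ε ∩ Dset m n p ∧ x ≠ t ∧
      q = linf (fun i => Psi x i - Psi t i) / linf (Psi t) / cdist x t} :=
    ⟨U, fun q hq => hup q hq⟩
  have hsup_le : sSup {q : ℝ | ∃ x, x ∈ B0 t ε ∩ Dset m n p ∧ x ≠ t ∧
      q = linf (fun i => Psi x i - Psi t i) / linf (Psi t) / cdist x t} ≤ U :=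
    csSup_le hSetNe (fun q hq => hup q hq)
  have hle_sup : (N - θ * Sabs) / P ≤ sSup {q : ℝ | ∃ x, x ∈ B0 t ε ∩ Dset m n p ∧ x ≠ t ∧
      q = linf (fun i => Psi x i - Psi t i) / linf (Psi t) / cdist x t} := by
    have hmem : linf (fun i => Psi xw i - Psi t i) / linf (Psi t) / cdist xw t
        ∈ {q : ℝ | ∃ x, x ∈ B0 t ε ∩ Dset m n p ∧ x ≠ t ∧
          q = linf (fun i => Psi x i - Psi t i) / linf (Psi t) / cdist x t} :=
      ⟨xw, ⟨hxwB, hxwD⟩, hxwne, rfl⟩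
    refine le_trans ?_ (le_csSup hbdd hmem)
    rw [hcw, div_div, div_le_div_iff₀ hP (by positivity)]
    calc (N - θ * Sabs) * (P * ε) = (ε * (N - θ * Sabs)) * P := by ring
      _ ≤ linf (fun i => Psi xw i - Psi t i) * P :=
          mul_le_mul_of_nonneg_right hwnum hP.le
  -- gap
  have hgap : θ * Sabs / P < η := by
    have h1 : θ * Sabs / P = η * (Sabs / (2 * (Sabs + 1))) := by
      rw [hθdef]; field_simp
    rw [h1]
    have h2 : Sabs / (2 * (Sabs + 1)) < 1 := by
      rw [div_lt_one hden]; linarith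
    calc η * (Sabs / (2 * (Sabs + 1))) < η * 1 := by
          apply mul_lt_mul_of_pos_left h2 hη
      _ = η := mul_one _
  rw [Real.dist_eq, abs_sub_lt_iff]
  constructor
  · have : U - N / P = θ * Sabs / P := by rw [hUdef]; ring
    linarith
  · have : N / P - (N - θ * Sabs) / P = θ * Sabs / P := by ring
    linarith
end
end
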